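/- For every real α with 0 < α < 1/2 and every ε > 0, there exists C such that for all integers c ≥ C and all integers k with αc < k < (1−α)c, one has |p_{k,c} − sin²(πk/(2c))| < ε. (In short: p_{k,c} = sin²(πk/(2c)) + o(1) as c → ∞, uniformly over k in the range αc < k < (1−α)c.) -/

import Mathlib

open Real

/-- The `c`-th Legendre polynomial, `P_c(x) = (1/(2^c c!)) (d/dx)^c (x² − 1)^c`,
viewed as a real function. -/
noncomputable def legendreP (c : ℕ) (t : ℝ) : ℝ :=
  (1 / (2 ^ c * (Nat.factorial c : ℝ))) *
    iteratedDeriv c (fun s : ℝ => (s ^ 2 - 1) ^ c) t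

/-- `x : ℕ → ℕ → ℝ` enumerates, for each `c ≥ 1`, the roots of the `c`-th Legendre
polynomial in `(−1, 1)` in increasing order: `x k c` is the `k`-th root
`x_{k,c}` (for `1 ≤ k ≤ c`), these are roots lying in `(−1,1)`, they are strictly
increasing in `k`, and every root of `P_c` in `(−1,1)` occurs among them. -/
def IsLegendreRootSystem (x : ℕ → ℕ → ℝ) : Prop :=
  ∀ c : ℕ, 1 ≤ c →
    (∀ k : ℕ, 1 ≤ k → k ≤ c → x k c ∈ Set.Ioo (-1 : ℝ) 1 ∧ legendreP c (x k c) = 0) ∧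
    (∀ k l : ℕ, 1 ≤ k → k < l → l ≤ c → x k c < x l c) ∧
    (∀ t ∈ Set.Ioo (-1 : ℝ) 1, legendreP c t = 0 → ∃ k : ℕ, 1 ≤ k ∧ k ≤ c ∧ x k c = t)

/-- The weight `w_{k,c} = 2 / ((1 − x_{k,c}²)^{3/2} · P_c′(x_{k,c})²)`. -/
noncomputable def wLeg (x : ℕ → ℕ → ℝ) (k c : ℕ) : ℝ :=
  2 / ((1 - x k c ^ 2) ^ ((3 : ℝ) / 2) * (deriv (legendreP c) (x k c)) ^ 2)

/-- The normalizing constant `N_c = Σ_{k=1}^c w_{k,c}`. -/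
noncomputable def NLeg (x : ℕ → ℕ → ℝ) (c : ℕ) : ℝ :=
  ∑ k ∈ Finset.Icc 1 c, wLeg x k c

/-!
Put `t = cos θ`. The Liouville substitution `u(θ) = √(sin θ) P_c(cos θ)` turns the Legendre
equation into `u'' + q u = 0` on `(0, π)` with `q(θ) = (c + 1/2)² + 1 / (4 sin² θ) ≥ (c + 1/2)²`,
so by Sturm comparison with `sin ((c + 1/2)(θ - a))` the function `u` vanishes in every closed
interval of length `π / (c + 1/2)` inside `(0, π)`. The `c` disjoint intervals of radius
`π / (2c + 1)` around the points `(c - k + 1/2) π / c` thus each contain the arccosine of a root;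
as `x_{1,c} < ⋯ < x_{c,c}` are all the roots, the `k`-th interval contains `arccos x_{k,c}`.
Hence `x_{k,c} = cos θ` with `|θ - (c - k) π / c| < π / c`, and
`p_{k,c} - sin² (π k / (2c)) = (cos θ - cos ((c - k) π / c)) / 2` is smaller than `π / (2c)`,
uniformly in `1 ≤ k ≤ c`.
-/

open Polynomial Set

-- the `k`-th derivative of `(X² - 1) w' = 2 n X w` for `w = (X² - 1)ⁿ`
theorem iterate_derivative_rodrigues {R : Type*} [CommRing R] (n k : ℕ) :
    (X ^ 2 - 1) * derivative^[k + 2] ((X ^ 2 - 1) ^ n : R[X])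
      + 2 * ((k : R[X]) + 1) * X * derivative^[k + 1] ((X ^ 2 - 1) ^ n)
      + ((k : R[X]) + 1) * (k : R[X]) * derivative^[k] ((X ^ 2 - 1) ^ n)
    = 2 * (n : R[X]) * X * derivative^[k + 1] ((X ^ 2 - 1) ^ n)
      + 2 * (n : R[X]) * ((k : R[X]) + 1) * derivative^[k] ((X ^ 2 - 1) ^ n) := by
  induction k with
  | zero =>
    have hw : (X ^ 2 - 1) * derivative ((X ^ 2 - 1) ^ n : R[X]) =
        2 * (n : R[X]) * X * (X ^ 2 - 1) ^ n := by
      cases n with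
      | zero => simp
      | succ m =>
        rw [derivative_pow_succ]
        simp only [derivative_sub, derivative_X_sq, derivative_one, C_ofNat, map_add, map_one,
          map_natCast]
        push_cast
        ring
    have h := congrArg derivative hw
    simp only [derivative_mul, derivative_sub, derivative_X_sq, derivative_one, derivative_ofNat,
      derivative_natCast, derivative_X, C_ofNat] at h
    simp only [Function.iterate_succ_apply', Function.iterate_zero_apply]
    push_cast at h ⊢
    linear_combination h
  | succ k ih =>
    have h := congrArg derivative ih
    simp only [derivative_add, derivative_mul, derivative_sub, derivative_X_sq, derivative_one,
      derivative_ofNat, derivative_natCast, derivative_X, C_ofNat,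
      ← Function.iterate_succ_apply' derivative] at h
    push_cast at h ⊢
    linear_combination h

theorem Polynomial.iteratedDeriv_eval {𝕜 : Type*} [NontriviallyNormedField 𝕜] (p : 𝕜[X])
    (k : ℕ) :
    iteratedDeriv k (fun t => p.eval t) = fun t => (derivative^[k] p).eval t := by
  induction k with
  | zero => simp
  | succ k ih =>
    ext t
    rw [iteratedDeriv_succ, ih, Function.iterate_succ_apply']
    exact Polynomial.deriv _

noncomputable def legendrePoly (n : ℕ) : ℝ[X] :=
  C (1 / (2 ^ n * (n.factorial : ℝ))) * derivative^[n] ((X ^ 2 - 1) ^ n)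

theorem legendreP_eq_eval (n : ℕ) : legendreP n = fun t => (legendrePoly n).eval t := by
  ext t
  have h : (fun s : ℝ => (s ^ 2 - 1) ^ n) = fun s => ((X ^ 2 - 1) ^ n : ℝ[X]).eval s := by
    simp
  simp [legendreP, legendrePoly, h, Polynomial.iteratedDeriv_eval]

theorem legendrePoly_ode (n : ℕ) :
    (1 - X ^ 2) * derivative (derivative (legendrePoly n)) - 2 * X * derivative (legendrePoly n)
      + (n : ℝ[X]) * ((n : ℝ[X]) + 1) * legendrePoly n = 0 := by
  have h := iterate_derivative_rodrigues (R := ℝ) n n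
  simp only [legendrePoly, derivative_C_mul, ← Function.iterate_succ_apply' derivative]
  linear_combination (-C (1 / (2 ^ n * (n.factorial : ℝ)))) * h

theorem hasDerivAt_eval_cos (p : ℝ[X]) (θ : ℝ) :
    HasDerivAt (fun t => p.eval (cos t)) (-sin θ * (derivative p).eval (cos θ)) θ :=
  ((p.hasDerivAt (cos θ)).comp θ (hasDerivAt_cos θ)).congr_deriv (by ring)

theorem hasDerivAt_sqrt_sin {θ : ℝ} (hθ : 0 < sin θ) :
    HasDerivAt (fun t => √(sin t)) (cos θ / (2 * √(sin θ))) θ := by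
  simpa [div_eq_mul_inv, mul_comm] using (hasDerivAt_sin θ).sqrt hθ.ne'

theorem hasDerivAt_cos_div_two_sqrt_sin {θ : ℝ} (hθ : 0 < sin θ) :
    HasDerivAt (fun t => cos t / (2 * √(sin t)))
      (-(1 / 4 + 1 / (4 * sin θ ^ 2)) * √(sin θ)) θ := by
  have hs : 0 < √(sin θ) := sqrt_pos.mpr hθ
  refine ((hasDerivAt_cos θ).div ((hasDerivAt_sqrt_sin hθ).const_mul 2)
    (by positivity)).congr_deriv ?_
  have hcos : cos θ ^ 2 = 1 - sin θ ^ 2 := by linarith [sin_sq_add_cos_sq θ]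
  have hs2 : √(sin θ) ^ 2 = sin θ := sq_sqrt hθ.le
  set s := √(sin θ)
  rw [← hs2] at hcos ⊢
  field_simp
  linear_combination (-4) * hcos

noncomputable def legendreLiouville (n : ℕ) (θ : ℝ) : ℝ :=
  √(sin θ) * (legendrePoly n).eval (cos θ)

noncomputable def legendreLiouvilleDeriv (n : ℕ) (θ : ℝ) : ℝ :=
  cos θ / (2 * √(sin θ)) * (legendrePoly n).eval (cos θ)
    + √(sin θ) * (-sin θ * (derivative (legendrePoly n)).eval (cos θ))

theorem hasDerivAt_legendreLiouville (n : ℕ) {θ : ℝ} (hθ : 0 < sin θ) :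
    HasDerivAt (legendreLiouville n) (legendreLiouvilleDeriv n θ) θ :=
  (hasDerivAt_sqrt_sin hθ).mul (hasDerivAt_eval_cos _ θ)

theorem hasDerivAt_legendreLiouvilleDeriv (n : ℕ) {θ : ℝ} (hθ : 0 < sin θ) :
    HasDerivAt (legendreLiouvilleDeriv n)
      (-(((n + 1 / 2) ^ 2 + 1 / (4 * sin θ ^ 2)) * legendreLiouville n θ)) θ := by
  set P := legendrePoly n
  have hP' : HasDerivAt (fun t => -sin t * (derivative P).eval (cos t))
      (-cos θ * (derivative P).eval (cos θ)
        + -sin θ * (-sin θ * (derivative (derivative P)).eval (cos θ))) θ :=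
    (hasDerivAt_sin θ).neg.mul (hasDerivAt_eval_cos _ θ)
  refine (((hasDerivAt_cos_div_two_sqrt_sin hθ).mul (hasDerivAt_eval_cos P θ)).add
    ((hasDerivAt_sqrt_sin hθ).mul hP')).congr_deriv ?_
  have hode := congrArg (eval (cos θ)) (legendrePoly_ode n)
  simp only [eval_add, eval_sub, eval_mul, eval_pow, eval_X, eval_one, eval_natCast, eval_ofNat,
    eval_zero] at hode
  have hsin : sin θ ^ 2 = 1 - cos θ ^ 2 := by linarith [sin_sq_add_cos_sq θ]
  have hs : 0 < √(sin θ) := sqrt_pos.mpr hθ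
  have hs2 : √(sin θ) ^ 2 = sin θ := sq_sqrt hθ.le
  simp only [legendreLiouville]
  set s := √(sin θ)
  rw [← hs2] at hsin ⊢
  field_simp
  linear_combination (16 * s ^ 4) * hode
    + (16 * s ^ 4 * (derivative (derivative P)).eval (cos θ)) * hsin

section SturmComparison

variable {u u' q : ℝ → ℝ} {m a : ℝ}

theorem sturm_comparison_not_pos (hm : 0 < m)
    (hu : ∀ θ ∈ Icc a (a + π / m), HasDerivAt u (u' θ) θ)
    (hu' : ∀ θ ∈ Icc a (a + π / m), HasDerivAt u' (-(q θ * u θ)) θ)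
    (hq : ∀ θ ∈ Icc a (a + π / m), m ^ 2 ≤ q θ) :
    ¬ ∀ θ ∈ Icc a (a + π / m), 0 < u θ := by
  intro hpos
  set b := a + π / m
  have hab : a ≤ b := le_add_of_nonneg_right (div_pos pi_pos hm).le
  have hmb : m * (b - a) = π := by simp only [b]; field_simp; ring
  -- the Wronskian of `u` and `sin (m (θ - a))`, a solution of the comparison equation
  set W : ℝ → ℝ := fun θ => u θ * (m * cos (m * (θ - a))) - u' θ * sin (m * (θ - a))
  have hW : ∀ θ ∈ Icc a b, HasDerivAt W ((q θ - m ^ 2) * u θ * sin (m * (θ - a))) θ := by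
    intro θ hθ
    have hlin : HasDerivAt (fun t => m * (t - a)) m θ := by
      simpa using ((hasDerivAt_id θ).sub_const a).const_mul m
    refine (((hu θ hθ).mul (hlin.cos.const_mul m)).sub ((hu' θ hθ).mul hlin.sin)).congr_deriv ?_
    ring
  have hWmono : MonotoneOn W (Icc a b) := by
    refine monotoneOn_of_deriv_nonneg (convex_Icc a b)
      (fun θ hθ => (hW θ hθ).continuousAt.continuousWithinAt) ?_ ?_
    all_goals
      rw [interior_Icc]
      intro θ hθ
    · exact (hW θ (Ioo_subset_Icc_self hθ)).differentiableAt.differentiableWithinAt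
    · have hsin : 0 < sin (m * (θ - a)) := by
        apply sin_pos_of_pos_of_lt_pi (by nlinarith [hθ.1])
        rw [← hmb]
        exact mul_lt_mul_of_pos_left (by linarith [hθ.2]) hm
      rw [(hW θ (Ioo_subset_Icc_self hθ)).deriv]
      have := hq θ (Ioo_subset_Icc_self hθ)
      have := hpos θ (Ioo_subset_Icc_self hθ)
      positivity
  have hWab := hWmono (left_mem_Icc.mpr hab) (right_mem_Icc.mpr hab) hab
  have hua := hpos a (left_mem_Icc.mpr hab)
  have hub := hpos b (right_mem_Icc.mpr hab)
  simp only [W, sub_self, mul_zero, cos_zero, sin_zero, hmb, cos_pi, sin_pi] at hWab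
  nlinarith

theorem sturm_comparison_exists_zero (hm : 0 < m)
    (hu : ∀ θ ∈ Icc a (a + π / m), HasDerivAt u (u' θ) θ)
    (hu' : ∀ θ ∈ Icc a (a + π / m), HasDerivAt u' (-(q θ * u θ)) θ)
    (hq : ∀ θ ∈ Icc a (a + π / m), m ^ 2 ≤ q θ) :
    ∃ θ ∈ Icc a (a + π / m), u θ = 0 := by
  by_contra! hne
  have hab : a ≤ a + π / m := le_add_of_nonneg_right (div_pos pi_pos hm).le
  have hcont : ContinuousOn u (Icc a (a + π / m)) :=
    fun θ hθ => (hu θ hθ).continuousAt.continuousWithinAt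
  have hsign : ∀ θ ∈ Icc a (a + π / m), 0 < u a * u θ := by
    intro θ hθ
    by_contra! hle
    have hsub : Icc a θ ⊆ Icc a (a + π / m) := Icc_subset_Icc_right hθ.2
    obtain ⟨t, ht, hut⟩ : ∃ t ∈ Icc a θ, u t = 0 := by
      rcases (hne a (left_mem_Icc.mpr hab)).lt_or_gt with ha | ha
      · exact intermediate_value_Icc hθ.1 (hcont.mono hsub) ⟨ha.le, by nlinarith⟩
      · exact intermediate_value_Icc' hθ.1 (hcont.mono hsub) ⟨by nlinarith, ha.le⟩
    exact hne t (hsub ht) hut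
  rcases (hne a (left_mem_Icc.mpr hab)).lt_or_gt with ha | ha
  · refine sturm_comparison_not_pos (u := fun θ => -u θ) (u' := fun θ => -u' θ) hm
      (fun θ hθ => (hu θ hθ).neg) (fun θ hθ => (hu' θ hθ).neg.congr_deriv (by ring)) hq
      (fun θ hθ => ?_)
    nlinarith [hsign θ hθ]
  · exact sturm_comparison_not_pos hm hu hu' hq
      (fun θ hθ => pos_of_mul_pos_right (hsign θ hθ) ha.le)

end SturmComparison

theorem StrictMonoOn.eqOn_id_of_mapsTo {α : Type*} [LinearOrder α] {s : Set α} (hs : s.Finite)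
    {f : α → α} (hf : StrictMonoOn f s) (hmaps : MapsTo f s s) : EqOn f id s := by
  have : Finite s := hs
  have hg : StrictMono hmaps.restrict := fun i j hij => hf i.2 j.2 hij
  intro j hj
  exact congrArg Subtype.val (le_antisymm (hg.apply_le (x := ⟨j, hj⟩)) hg.le_apply)

theorem exists_legendreP_cos_eq_zero_near (n : ℕ) {t : ℝ} (h0 : π / (2 * n + 1) < t)
    (hπ : t + π / (2 * n + 1) < π) :
    ∃ θ, |θ - t| ≤ π / (2 * n + 1) ∧ legendreP n (cos θ) = 0 := by
  set m : ℝ := n + 1 / 2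
  have hm : 0 < m := by positivity
  have hlen : t - π / (2 * n + 1) + π / m = t + π / (2 * n + 1) := by
    simp only [m]; field_simp; ring
  have hsin : ∀ θ ∈ Icc (t - π / (2 * n + 1)) (t - π / (2 * n + 1) + π / m), 0 < sin θ := by
    intro θ hθ
    rw [hlen] at hθ
    exact sin_pos_of_pos_of_lt_pi (by linarith [hθ.1]) (by linarith [hθ.2])
  obtain ⟨θ, hθ, hzero⟩ := sturm_comparison_exists_zero (u := legendreLiouville n)
    (q := fun θ => m ^ 2 + 1 / (4 * sin θ ^ 2)) hm
    (fun θ hθ => hasDerivAt_legendreLiouville n (hsin θ hθ))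
    (fun θ hθ => hasDerivAt_legendreLiouvilleDeriv n (hsin θ hθ))
    (fun θ _ => le_add_of_nonneg_right (by positivity))
  refine ⟨θ, ?_, ?_⟩
  · rw [hlen] at hθ
    exact abs_sub_le_iff.mpr ⟨by linarith [hθ.2], by linarith [hθ.1]⟩
  · rw [legendreP_eq_eval]
    exact (mul_eq_zero.mp hzero).resolve_left (sqrt_pos.mpr (hsin θ hθ)).ne'

theorem pi_div_two_mul_add_one_lt {y : ℝ} (hy : 0 < y) : π / (2 * y + 1) < π / y / 2 := by
  rw [div_div]
  exact div_lt_div_of_pos_left pi_pos (by positivity) (by linarith)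

theorem IsLegendreRootSystem.exists_root_near {x : ℕ → ℕ → ℝ} (hx : IsLegendreRootSystem x)
    {c j : ℕ} (hj : j ∈ Icc 1 c) :
    ∃ θ ∈ Ioo 0 π, |θ - (c - j + 1 / 2) * (π / c)| ≤ π / (2 * c + 1) ∧
      ∃ i ∈ Icc 1 c, x i c = cos θ := by
  have hc : 1 ≤ c := hj.1.trans hj.2
  have hcpos : (0 : ℝ) < c := by exact_mod_cast hc
  have hj1 : (1 : ℝ) ≤ j := by exact_mod_cast hj.1
  have hjc : (j : ℝ) ≤ c := by exact_mod_cast hj.2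
  have hh : 0 < π / c := by positivity
  have hch : c * (π / c) = π := by field_simp
  have hr := pi_div_two_mul_add_one_lt hcpos
  obtain ⟨θ, hθ, hzero⟩ := exists_legendreP_cos_eq_zero_near c (t := (c - j + 1 / 2) * (π / c))
    (by nlinarith [mul_nonneg (sub_nonneg.2 hjc) hh.le])
    (by nlinarith [mul_nonneg (sub_nonneg.2 hj1) hh.le])
  have hθ' := abs_sub_le_iff.mp hθ
  have hθπ : θ ∈ Ioo 0 π := by
    constructor <;>
      nlinarith [mul_nonneg (sub_nonneg.2 hjc) hh.le, mul_nonneg (sub_nonneg.2 hj1) hh.le]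
  have hcos : cos θ ^ 2 < 1 := by
    nlinarith [sin_sq_add_cos_sq θ, sin_pos_of_pos_of_lt_pi hθπ.1 hθπ.2]
  obtain ⟨i, hi1, hic, hxi⟩ :=
    (hx c hc).2.2 (cos θ) (abs_lt.mp (sq_lt_one_iff_abs_lt_one _ |>.mp hcos)) hzero
  exact ⟨θ, hθπ, hθ, i, ⟨hi1, hic⟩, hxi⟩

theorem IsLegendreRootSystem.exists_cos_eq_near {x : ℕ → ℕ → ℝ} (hx : IsLegendreRootSystem x)
    {c k : ℕ} (hk : k ∈ Icc 1 c) :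
    ∃ θ, x k c = cos θ ∧ |θ - (c - k + 1 / 2) * (π / c)| ≤ π / (2 * c + 1) := by
  have hc : 1 ≤ c := hk.1.trans hk.2
  have hcpos : (0 : ℝ) < c := by exact_mod_cast hc
  choose! θ hθπ hθ g hg hxg using fun j (hj : j ∈ Icc 1 c) => hx.exists_root_near hj
  have hxmono : StrictMonoOn (fun i => x i c) (Icc 1 c) :=
    fun i hi l hl hil => (hx c hc).2.1 i l hi.1 hil hl.2
  -- the windows of radius `π / (2c + 1)` around the points `(c - j + 1/2) π / c` are disjoint
  have hgmono : StrictMonoOn g (Icc 1 c) := by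
    intro j hj j' hj' hjj'
    have hjj'R : (j : ℝ) + 1 ≤ j' := by exact_mod_cast hjj'
    have hr := pi_div_two_mul_add_one_lt hcpos
    have hlt : θ j' < θ j := by
      nlinarith [(abs_sub_le_iff.mp (hθ j hj)).2, (abs_sub_le_iff.mp (hθ j' hj')).1,
        mul_le_mul_of_nonneg_right hjj'R (div_pos pi_pos hcpos).le]
    have hcos := cos_lt_cos_of_nonneg_of_le_pi (hθπ j' hj').1.le (hθπ j hj).2.le hlt
    rw [← hxg j hj, ← hxg j' hj'] at hcos
    exact (hxmono.lt_iff_lt (hg j hj) (hg j' hj')).mp hcos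
  have hgk : g k = k := hgmono.eqOn_id_of_mapsTo (finite_Icc 1 c) hg hk
  exact ⟨θ k, by rw [← hxg k hk, hgk], hθ k hk⟩

theorem IsLegendreRootSystem.abs_sub_sin_sq_lt {x : ℕ → ℕ → ℝ} (hx : IsLegendreRootSystem x)
    {c k : ℕ} (hk : k ∈ Icc 1 c) :
    |(x k c + 1) / 2 - sin (π * k / (2 * c)) ^ 2| < π / (2 * c) := by
  have hcpos : (0 : ℝ) < c := by exact_mod_cast hk.1.trans hk.2
  obtain ⟨θ, hxk, hθ⟩ := hx.exists_cos_eq_near hk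
  set T := (c - k) * (π / c)
  have hdiff : (x k c + 1) / 2 - sin (π * k / (2 * c)) ^ 2 = (cos θ - cos T) / 2 := by
    rw [hxk, sin_sq_eq_half_sub, show T = π - 2 * (π * k / (2 * c)) by simp only [T]; field_simp,
      cos_pi_sub]
    ring
  have hr := pi_div_two_mul_add_one_lt hcpos
  have hθT : |θ - T| < π / c := by
    rw [show (c - k + 1 / 2) * (π / c) = T + π / c / 2 by ring] at hθ
    rw [abs_sub_lt_iff]
    constructor <;> linarith [abs_sub_le_iff.mp hθ, div_pos pi_pos hcpos]
  calc |(x k c + 1) / 2 - sin (π * k / (2 * c)) ^ 2| = |cos θ - cos T| / 2 := by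
        rw [hdiff, abs_div, abs_two]
    _ ≤ |θ - T| / 2 := div_le_div_of_nonneg_right (abs_cos_sub_cos_le θ T) zero_le_two
    _ < π / c / 2 := by gcongr
    _ = π / (2 * c) := by rw [div_div, mul_comm]

theorem p_asymptotics_general (x : ℕ → ℕ → ℝ) (hx : IsLegendreRootSystem x)
    (α : ℝ) (hα0 : 0 < α) (ε : ℝ) (hε : 0 < ε) :
    ∃ C : ℕ, ∀ c : ℕ, C ≤ c → ∀ k : ℕ,
      α * (c : ℝ) < (k : ℝ) → (k : ℝ) < (1 - α) * (c : ℝ) →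
      |(x k c + 1) / 2 - Real.sin (π * (k : ℝ) / (2 * (c : ℝ))) ^ 2| < ε := by
  obtain ⟨C, hC⟩ := exists_nat_gt (π / ε)
  refine ⟨C, fun c hc k hαk hkα => ?_⟩
  have hcε : π < c * ε := (div_lt_iff₀ hε).mp (hC.trans_le (by exact_mod_cast hc))
  have hcpos : (0 : ℝ) < c := pos_of_mul_pos_left (pi_pos.trans hcε) hε.le
  have hk : k ∈ Icc 1 c := by
    have hk0 : (0 : ℝ) < k := by nlinarith
    have hkc : (k : ℝ) < c := by nlinarith
    exact ⟨by exact_mod_cast hk0, by exact_mod_cast hkc.le⟩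
  calc _ < π / (2 * c) := hx.abs_sub_sin_sq_lt hk
    _ < ε := by rw [div_lt_iff₀ (by positivity)]; linarith [pi_pos]

/-- `p_{k,c} = (x_{k,c}+1)/2 = sin²(πk/(2c)) + o(1)` as `c → ∞`, uniformly over `k`
with `αc < k < (1−α)c`. -/
theorem p_asymptotics (x : ℕ → ℕ → ℝ) (hx : IsLegendreRootSystem x)
    (α : ℝ) (hα0 : 0 < α) (hα1 : α < 1 / 2) (ε : ℝ) (hε : 0 < ε) :
    ∃ C : ℕ, ∀ c : ℕ, C ≤ c → ∀ k : ℕ,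
      α * (c : ℝ) < (k : ℝ) → (k : ℝ) < (1 - α) * (c : ℝ) →
      |(x k c + 1) / 2 - Real.sin (π * (k : ℝ) / (2 * (c : ℝ))) ^ 2| < ε :=
  p_asymptotics_general x hx α hα0 ε hε
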